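/- arXiv:2002.12422 — 3 statements merged into one kernel-verified Lean document; each statement's English description precedes it below -/
import Mathlib

section
/- Let (X,d) be a metric space, let o ∈ X, and let δ be an asymmetric metric on X satisfying conditions (bl) and (ic). (a) For every normalized horofunction φ of (X, d, δ) with base point o, there exists p ∈ *X such that for every x ∈ X the hyperreal *δ(p,x) − *δ(p,o) is finite with standard part φ(x). (b) If moreover every bounded subset of X is totally bounded (X is almost proper), then conversely, for every p ∈ *X the function h_p : X → ℝ defined by h_p(x) = st(*δ(p,x) − *δ(p,o)) is a normalized horofunction of (X, d, δ) with base point o. -/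
open Bornology Filter

/-- The extension `*δ : *X × *X → *ℝ` of a map `δ : X × X → ℝ` to the ultrapower of `X`
with respect to the ultrafilter `hyperfilter ℕ`. -/
noncomputable def starMap₂ {X : Type*} (δ : X → X → ℝ)
    (p q : Filter.Germ (Filter.hyperfilter ℕ : Filter ℕ) X) : ℝ* :=
  p.map₂ δ q

/-!
(a) Bounded sets are exhausted by the balls `closedBall o n`, so uniform convergence on bounded
sets is first countable and a horofunction `φ` is the limit of a sequence `δ(qₙ, ·) - δ(qₙ, o)`;
the hyperpoint `p = [qₙ]` then satisfies `*δ(p, x) - *δ(p, o) ≈ φ x`.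

(b) By the triangle inequality and (bl) the functions `δ(q, ·) - δ(q, o)` are uniformly
`β`-Lipschitz, so they are bounded at each point and their ultralimit `x ↦ st(*δ(p,x) - *δ(p,o))`
exists and is `β`-Lipschitz. On a totally bounded set, pointwise convergence of an equi-Lipschitz
family at the points of a finite net is uniform convergence, so the ultralimit is a limit of
functions `δ(q, ·) - δ(q, o)` uniformly on bounded sets.
-/

open scoped NNReal Topology Uniformity UniformConvergence

section AsymmetricMetric

variable {X : Type*} [PseudoMetricSpace X] {δ : X → X → ℝ}

theorem abs_sub_le_mul_dist_of_triangle {K : ℝ} (htri : ∀ u v w, δ u w ≤ δ u v + δ v w)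
    (hK : ∀ u v, δ u v ≤ K * dist u v) (q x y : X) : |δ q x - δ q y| ≤ K * dist x y := by
  rw [abs_le]
  constructor
  · linarith [htri q x y, hK x y]
  · have hyx := hK y x
    rw [dist_comm] at hyx
    linarith [htri q y x]

theorem lipschitzWith_sub_of_triangle {K : ℝ≥0} (htri : ∀ u v w, δ u w ≤ δ u v + δ v w)
    (hK : ∀ u v, δ u v ≤ K * dist u v) (q o : X) : LipschitzWith K fun x => δ q x - δ q o :=
  LipschitzWith.of_dist_le_mul fun x y => by
    rw [Real.dist_eq, sub_sub_sub_cancel_right]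
    exact abs_sub_le_mul_dist_of_triangle htri hK q x y

end AsymmetricMetric

theorem starMap₂_coe_sub_coe {X : Type*} (δ : X → X → ℝ) (q : ℕ → X) (x y : X) :
    starMap₂ δ q x - starMap₂ δ q y = Hyperreal.ofSeq fun n => δ (q n) x - δ (q n) y :=
  rfl

theorem Hyperreal.tendsto_st_ofSeq_of_abs_le {g : ℕ → ℝ} {C : ℝ} (hg : ∀ n, |g n| ≤ C) :
    Tendsto g (hyperfilter ℕ) (𝓝 (st (ofSeq g))) := by
  have hmem : (Ultrafilter.map g (hyperfilter ℕ) : Filter ℝ) ≤ 𝓟 (Metric.closedBall 0 C) :=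
    tendsto_principal.2 (Eventually.of_forall fun n => mem_closedBall_zero_iff.2 (hg n))
  obtain ⟨r, -, hr⟩ := (isCompact_closedBall (0 : ℝ) C).ultrafilter_le_nhds _ hmem
  have hr : Tendsto g (hyperfilter ℕ) (𝓝 r) := hr
  rwa [(isSt_ofSeq_iff_tendsto.2 hr).st_eq]

theorem lipschitzWith_of_tendsto {ι X Y : Type*} [PseudoEMetricSpace X] [PseudoEMetricSpace Y]
    {F : ι → X → Y} {f : X → Y} {L : Filter ι} [L.NeBot] {K : ℝ≥0}
    (hF : ∀ i, LipschitzWith K (F i)) (hlim : ∀ x, Tendsto (fun i => F i x) L (𝓝 (f x))) :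
    LipschitzWith K f :=
  (isClosed_setOfPred_lipschitzWith K).mem_of_tendsto (tendsto_pi_nhds.2 hlim)
    (Eventually.of_forall hF)

theorem TotallyBounded.tendstoUniformlyOn_of_lipschitzWith {ι X Y : Type*}
    [PseudoMetricSpace X] [PseudoMetricSpace Y] {F : ι → X → Y} {f : X → Y} {L : Filter ι}
    {K : ℝ≥0} {S : Set X} (hS : TotallyBounded S) (hF : ∀ i, LipschitzWith K (F i))
    (hf : LipschitzWith K f) (hlim : ∀ x, Tendsto (fun i => F i x) L (𝓝 (f x))) :
    TendstoUniformlyOn F f L S := by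
  rw [Metric.tendstoUniformlyOn_iff]
  intro ε hε
  set r := ε / (2 * K + 1) with hr
  have hr_pos : 0 < r := by positivity
  have hε_eq : (2 * K + 1) * r = ε := by rw [hr]; field_simp
  obtain ⟨t, ht, hcover⟩ := Metric.totallyBounded_iff.1 hS r hr_pos
  have hnet : ∀ᶠ i in L, ∀ c ∈ t, dist (f c) (F i c) < r :=
    (eventually_all_finite ht).2 fun c _ =>
      (hlim c).eventually (Metric.ball_mem_nhds (f c) hr_pos) |>.mono fun i hi => by
        rwa [dist_comm] at hi
  filter_upwards [hnet] with i hi x hx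
  obtain ⟨c, hct, hxc⟩ := Set.mem_iUnion₂.1 (hcover hx)
  rw [Metric.mem_ball] at hxc
  have hfc : dist (f x) (f c) ≤ K * r := (hf.dist_le_mul x c).trans (by gcongr)
  have hFc : dist (F i c) (F i x) ≤ K * r :=
    ((hF i).dist_le_mul c x).trans (by rw [dist_comm c x]; gcongr)
  linarith [dist_triangle4 (f x) (f c) (F i c) (F i x), hi c hct]

namespace UniformOnFun

variable {ι X Y : Type*}

theorem tendsto_ofFun_of_lipschitzWith [PseudoMetricSpace X] [PseudoMetricSpace Y]
    {𝔖 : Set (Set X)} (h𝔖 : ∀ s ∈ 𝔖, TotallyBounded s) {F : ι → X → Y} {f : X → Y}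
    {L : Filter ι} {K : ℝ≥0} (hF : ∀ i, LipschitzWith K (F i)) (hf : LipschitzWith K f)
    (hlim : ∀ x, Tendsto (fun i => F i x) L (𝓝 (f x))) :
    Tendsto (fun i => ofFun 𝔖 (F i)) L (𝓝 (ofFun 𝔖 f)) :=
  UniformOnFun.tendsto_iff_tendstoUniformlyOn.2 fun s hs =>
    TotallyBounded.tendstoUniformlyOn_of_lipschitzWith (h𝔖 s hs) hF hf hlim

instance isCountablyGenerated_uniformity_isBounded [PseudoMetricSpace X] [Nonempty X]
    [UniformSpace Y] [IsCountablyGenerated (𝓤 Y)] :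
    IsCountablyGenerated (𝓤 (X →ᵤ[{s : Set X | IsBounded s}] Y)) := by
  obtain ⟨o⟩ := ‹Nonempty X›
  refine UniformOnFun.isCountablyGenerated_uniformity _
    (t := fun n : ℕ => Metric.closedBall o n) (fun n => Metric.isBounded_closedBall)
    (fun m n hmn => Metric.closedBall_subset_closedBall (Nat.cast_le.2 hmn)) fun s hs => ?_
  obtain ⟨r, hr⟩ := (Metric.isBounded_iff_subset_closedBall o).1 hs
  obtain ⟨n, hn⟩ := exists_nat_ge r
  exact ⟨n, hr.trans (Metric.closedBall_subset_closedBall hn)⟩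

theorem exists_seq_tendsto_of_mem_closure_range [PseudoMetricSpace X] [Nonempty X]
    [UniformSpace Y] [IsCountablyGenerated (𝓤 Y)] {F : ι → X → Y} {f : X → Y}
    (hf : ofFun {s : Set X | IsBounded s} f ∈
      closure (ofFun {s : Set X | IsBounded s} '' Set.range F)) :
    ∃ q : ℕ → ι, ∀ x, Tendsto (fun n => F (q n) x) atTop (𝓝 (f x)) := by
  obtain ⟨u, hu, hlim⟩ := mem_closure_iff_seq_limit.1 hf
  have hu' : ∀ n, ∃ i, ofFun _ (F i) = u n := fun n => by
    obtain ⟨_, ⟨i, rfl⟩, hi⟩ := hu n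
    exact ⟨i, hi⟩
  choose q hq using hu'
  obtain rfl : (fun n => ofFun _ (F (q n))) = u := funext hq
  exact ⟨q, fun x =>
    (UniformOnFun.tendsto_iff_tendstoUniformlyOn.1 hlim {x} isBounded_singleton).tendsto_at rfl⟩

end UniformOnFun

theorem horofunctions_via_ultrapower_general
    {X : Type*} [MetricSpace X] (o : X) (δ : X → X → ℝ)
    (htri : ∀ u v w, δ u w ≤ δ u v + δ v w)
    (hbl : ∃ α > (0 : ℝ), ∃ β > (0 : ℝ), ∀ p q,
      dist p q ≤ α * δ p q ∧ δ p q ≤ β * dist p q) :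
    (∀ φ : X → ℝ,
      UniformOnFun.ofFun {s : Set X | IsBounded s} φ ∈
        closure (UniformOnFun.ofFun {s : Set X | IsBounded s} ''
          {f : X → ℝ | ∃ p : X, f = fun x => δ p x - δ p o}) →
      ∃ p : Filter.Germ (Filter.hyperfilter ℕ : Filter ℕ) X,
        ∀ x : X, Hyperreal.IsSt (starMap₂ δ p ↑x - starMap₂ δ p ↑o) (φ x)) ∧
    ((∀ s : Set X, IsBounded s → TotallyBounded s) →
      ∀ p : Filter.Germ (Filter.hyperfilter ℕ : Filter ℕ) X,
        UniformOnFun.ofFun {s : Set X | IsBounded s}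
            (fun x => Hyperreal.st (starMap₂ δ p ↑x - starMap₂ δ p ↑o)) ∈
          closure (UniformOnFun.ofFun {s : Set X | IsBounded s} ''
            {f : X → ℝ | ∃ p : X, f = fun x => δ p x - δ p o})) := by
  obtain ⟨_, -, β, hβ, hαβ⟩ := hbl
  lift β to ℝ≥0 using hβ.le
  have hδβ : ∀ u v, δ u v ≤ β * dist u v := fun u v => (hαβ u v).2
  have : Nonempty X := ⟨o⟩
  have hrange : {f : X → ℝ | ∃ p : X, f = fun x => δ p x - δ p o} =
      Set.range fun p x => δ p x - δ p o :=
    Set.ext fun _ => exists_congr fun _ => eq_comm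
  rw [hrange]
  constructor
  · intro φ hφ
    obtain ⟨q, hq⟩ := UniformOnFun.exists_seq_tendsto_of_mem_closure_range hφ
    exact ⟨q, fun x => starMap₂_coe_sub_coe δ q x o ▸ Hyperreal.isSt_of_tendsto (hq x)⟩
  · intro htb p
    induction p using Germ.inductionOn with | h q => ?_
    have hF : ∀ n, LipschitzWith β fun x => δ (q n) x - δ (q n) o :=
      fun n => lipschitzWith_sub_of_triangle htri hδβ (q n) o
    have hlim : ∀ x, Tendsto (fun n => δ (q n) x - δ (q n) o) (hyperfilter ℕ)
        (𝓝 (Hyperreal.st (starMap₂ δ q x - starMap₂ δ q o))) := fun x =>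
      Hyperreal.tendsto_st_ofSeq_of_abs_le fun n => abs_sub_le_mul_dist_of_triangle htri hδβ _ x o
    exact mem_closure_of_tendsto
      (UniformOnFun.tendsto_ofFun_of_lipschitzWith htb hF (lipschitzWith_of_tendsto hF hlim) hlim)
      (Eventually.of_forall fun n => Set.mem_image_of_mem _ (Set.mem_range_self (q n)))

/-- Let `(X,d)` be a metric space, `o ∈ X`, and `δ` an asymmetric metric
satisfying (bl) and (ic).
(a) For every normalized horofunction `φ` (an element of the closure of
`{x ↦ δ(p,x) − δ(p,o) : p ∈ X}` in the topology of uniform convergence on bounded sets)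
there exists `p ∈ *X` such that for every `x ∈ X` the hyperreal
`*δ(p,x) − *δ(p,o)` is finite with standard part `φ(x)`.
(b) If every bounded subset of `X` is totally bounded, then conversely every function
`x ↦ st(*δ(p,x) − *δ(p,o))`, for `p ∈ *X`, is a normalized horofunction. -/
theorem horofunctions_via_ultrapower
    {X : Type*} [MetricSpace X] (o : X) (δ : X → X → ℝ)
    (hpos : ∀ u v, 0 ≤ δ u v)
    (hzero : ∀ u v, δ u v = 0 ↔ u = v)
    (htri : ∀ u v w, δ u w ≤ δ u v + δ v w)
    (hbl : ∃ α > (0 : ℝ), ∃ β > (0 : ℝ), ∀ p q,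
      dist p q ≤ α * δ p q ∧ δ p q ≤ β * dist p q)
    (hic : ∀ p q : X, ∀ s : ℝ, s ∈ Set.Icc 0 (δ p q) →
      ∃ z : X, δ p q = δ p z + δ z q ∧ δ p z = s) :
    (∀ φ : X → ℝ,
      UniformOnFun.ofFun {s : Set X | IsBounded s} φ ∈
        closure (UniformOnFun.ofFun {s : Set X | IsBounded s} ''
          {f : X → ℝ | ∃ p : X, f = fun x => δ p x - δ p o}) →
      ∃ p : Filter.Germ (Filter.hyperfilter ℕ : Filter ℕ) X,
        ∀ x : X, Hyperreal.IsSt (starMap₂ δ p ↑x - starMap₂ δ p ↑o) (φ x)) ∧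
    ((∀ s : Set X, IsBounded s → TotallyBounded s) →
      ∀ p : Filter.Germ (Filter.hyperfilter ℕ : Filter ℕ) X,
        UniformOnFun.ofFun {s : Set X | IsBounded s}
            (fun x => Hyperreal.st (starMap₂ δ p ↑x - starMap₂ δ p ↑o)) ∈
          closure (UniformOnFun.ofFun {s : Set X | IsBounded s} ''
            {f : X → ℝ | ∃ p : X, f = fun x => δ p x - δ p o})) :=
  horofunctions_via_ultrapower_general o δ htri hbl
end

section
/- Let (X,d) be a metric space in which every bounded subset is totally bounded, let δ be an asymmetric metric on X, and let A ⊆ X be a closed subset such that both δ (with respect to d on X) and the restriction of δ to A × A (with respect to the restriction of d to A) satisfy conditions (bl) and (ic). Let o ∈ A. Then every normalized horofunction of (A, d|_A, δ|_{A×A}) with base point o is the restriction to A of some normalized horofunction of (X, d, δ) with base point o. -/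
/-!
Take an ultrafilter on `A` along which the functions `δ p · - δ p o` (`p ∈ A`) converge to the
given horofunction of `A`. The same functions, now on all of `X`, are uniformly Lipschitz and
vanish at `o`, so they converge pointwise on `X` along this ultrafilter by Tychonoff's theorem;
uniform equicontinuity upgrades this to uniform convergence on the totally bounded, hence on the
bounded, subsets of `X`. The limit is a horofunction of `X` extending the given one.
-/

open Bornology Filter Set Metric Topology
open scoped NNReal

theorem exists_ultrafilter_tendsto_of_mem_closure {ι Y : Type*} [TopologicalSpace Y]
    {f : ι → Y} {s : Set Y} {y : Y} (hy : y ∈ closure s) (hs : s ⊆ range f) :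
    ∃ 𝒰 : Ultrafilter ι, Tendsto f 𝒰 (𝓝 y) := by
  obtain ⟨u, hsu, huy⟩ := mem_closure_iff_ultrafilter.1 hy
  have hu : f '' univ ∈ u := u.mem_of_superset hsu (image_univ.symm ▸ hs)
  refine ⟨Ultrafilter.ofComapInfPrincipal hu, ?_⟩
  rw [Tendsto, ← Ultrafilter.coe_map, Ultrafilter.ofComapInfPrincipal_eq_of_map]
  exact huy

theorem lipschitzWith_sub_const_of_le_mul_dist {X : Type*} [PseudoMetricSpace X]
    {δ : X → X → ℝ} {K : ℝ≥0} (htri : ∀ u v w, δ u w ≤ δ u v + δ v w)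
    (hδ : ∀ p q, δ p q ≤ K * dist p q) (p : X) (c : ℝ) :
    LipschitzWith K fun x => δ p x - c := by
  refine LipschitzWith.of_dist_le_mul fun x y => ?_
  rw [Real.dist_eq, abs_le]
  have hδ' : δ y x ≤ K * dist x y := dist_comm x y ▸ hδ y x
  constructor <;> linarith [htri p x y, htri p y x, hδ x y]

theorem isBounded_range_apply_of_lipschitzWith {ι X α : Type*} [PseudoMetricSpace X]
    [PseudoMetricSpace α] {F : ι → X → α} {K : ℝ≥0} (hF : ∀ i, LipschitzWith K (F i))
    {o : X} (ho : IsBounded (range fun i => F i o)) (x : X) : IsBounded (range fun i => F i x) := by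
  obtain ⟨C, hC⟩ := isBounded_range_iff.1 ho
  refine isBounded_range_iff.2 ⟨K * dist x o + C + K * dist x o, fun i j => ?_⟩
  calc dist (F i x) (F j x)
      ≤ dist (F i x) (F i o) + dist (F i o) (F j o) + dist (F j o) (F j x) :=
        dist_triangle4 _ _ _ _
    _ ≤ K * dist x o + C + K * dist x o := by
        gcongr
        exacts [(hF i).dist_le_mul x o, hC i j,
          (hF j).dist_le_mul o x |>.trans_eq (by rw [dist_comm])]

theorem Ultrafilter.exists_tendsto_of_isBounded_range {ι X α : Type*} [PseudoMetricSpace α]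
    [ProperSpace α] {F : ι → X → α} (hF : ∀ x, IsBounded (range fun i => F i x))
    (𝒰 : Ultrafilter ι) : ∃ ψ : X → α, Tendsto F 𝒰 (𝓝 ψ) := by
  have hK : IsCompact (univ.pi fun x => closure (range fun i => F i x)) :=
    isCompact_univ_pi fun x => (hF x).isCompact_closure
  have hF𝒰 : ↑(𝒰.map F) ≤ 𝓟 (univ.pi fun x => closure (range fun i => F i x)) :=
    le_principal_iff.2 <| mem_map.2 <| Eventually.of_forall fun i =>
      mem_univ_pi.2 fun x => subset_closure (mem_range_self (f := fun i => F i x) i)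
  obtain ⟨ψ, -, hψ⟩ := hK.ultrafilter_le_nhds _ hF𝒰
  exact ⟨ψ, hψ⟩

theorem UniformEquicontinuous.tendstoUniformlyOn_of_tendsto {ι X α : Type*}
    [PseudoMetricSpace X] [PseudoMetricSpace α] {l : Filter ι} [l.NeBot] {F : ι → X → α}
    {ψ : X → α} (hF : UniformEquicontinuous F) (hψ : Tendsto F l (𝓝 ψ)) {S : Set X}
    (hS : TotallyBounded S) : TendstoUniformlyOn F ψ l S := by
  have hψc : UniformContinuous ψ := hψ.uniformContinuous_of_uniformEquicontinuous hF
  rw [Metric.tendstoUniformlyOn_iff]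
  intro ε hε
  obtain ⟨r₁, hr₁, hFr⟩ := Metric.uniformEquicontinuous_iff.1 hF (ε / 3) (by positivity)
  obtain ⟨r₂, hr₂, hψr⟩ := Metric.uniformContinuous_iff.1 hψc (ε / 3) (by positivity)
  obtain ⟨t, ht, hSt⟩ := Metric.totallyBounded_iff.1 hS (min r₁ r₂) (lt_min hr₁ hr₂)
  have hnear : ∀ᶠ i in l, ∀ y ∈ t, dist (ψ y) (F i y) < ε / 3 := by
    rw [eventually_all_finite ht]
    intro y _
    simpa only [dist_comm] using Metric.tendsto_nhds.1 (tendsto_pi_nhds.1 hψ y) _ (by positivity)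
  filter_upwards [hnear] with i hi x hx
  obtain ⟨y, hyt, hxy⟩ := mem_iUnion₂.1 (hSt hx)
  rw [mem_ball, lt_min_iff] at hxy
  calc dist (ψ x) (F i x) ≤ dist (ψ x) (ψ y) + dist (ψ y) (F i y) + dist (F i y) (F i x) :=
        dist_triangle4 _ _ _ _
    _ < ε / 3 + ε / 3 + ε / 3 := by
        gcongr
        exacts [hψr hxy.2, hi y hyt, (hFr x y hxy.1 i).trans_eq' (dist_comm _ _)]
    _ = ε := by ring

theorem horofunction_restriction_general
    {X : Type*} [MetricSpace X] (δ : X → X → ℝ)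
    (halmostproper : ∀ s : Set X, IsBounded s → TotallyBounded s)
    (htri : ∀ u v w, δ u w ≤ δ u v + δ v w)
    (A : Set X) (o : X)
    (hblX : ∃ α > (0 : ℝ), ∃ β > (0 : ℝ), ∀ p q : X,
      dist p q ≤ α * δ p q ∧ δ p q ≤ β * dist p q) :
    ∀ φ : A → ℝ,
      UniformOnFun.ofFun {s : Set A | IsBounded s} φ ∈
        closure (UniformOnFun.ofFun {s : Set A | IsBounded s} ''
          {f : A → ℝ | ∃ p : A, f = fun x : A => δ ↑p ↑x - δ ↑p o}) →
      ∃ ψ : X → ℝ,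
        UniformOnFun.ofFun {s : Set X | IsBounded s} ψ ∈
          closure (UniformOnFun.ofFun {s : Set X | IsBounded s} ''
            {f : X → ℝ | ∃ p : X, f = fun x => δ p x - δ p o}) ∧
        ∀ a : A, φ a = ψ ↑a := by
  obtain ⟨_, _, β, hβ, hbl⟩ := hblX
  set F : X → X → ℝ := fun p x => δ p x - δ p o
  have hlip : ∀ p, LipschitzWith β.toNNReal (F p) := by
    refine fun p => lipschitzWith_sub_const_of_le_mul_dist htri (fun p q => ?_) p _
    rw [Real.coe_toNNReal β hβ.le]
    exact (hbl p q).2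
  intro φ hφ
  obtain ⟨𝒰, h𝒰⟩ := exists_ultrafilter_tendsto_of_mem_closure hφ
    (f := fun p : A => UniformOnFun.ofFun {s : Set A | IsBounded s} fun x : A => F p x)
    (by rintro _ ⟨_, ⟨p, rfl⟩, rfl⟩; exact ⟨p, rfl⟩)
  have hφ_pt : ∀ a : A, Tendsto (fun p : A => F p a) 𝒰 (𝓝 (φ a)) := fun a =>
    ((UniformOnFun.uniformContinuous_eval_of_mem ℝ _ (mem_singleton a)
      (isBounded_singleton (x := a))).continuous.tendsto _).comp h𝒰
  have hbdd : ∀ x, IsBounded (range fun p : A => F p x) :=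
    isBounded_range_apply_of_lipschitzWith (fun p => hlip p) (o := o)
      ((isBounded_singleton (x := 0)).subset (by rintro _ ⟨p, rfl⟩; simp [F]))
  obtain ⟨ψ, hψ⟩ := 𝒰.exists_tendsto_of_isBounded_range hbdd
  have hequi : UniformEquicontinuous fun p : A => F p :=
    LipschitzWith.uniformEquicontinuous _ _ fun p => hlip p
  have hψX : Tendsto (fun p : A => UniformOnFun.ofFun {s : Set X | IsBounded s} (F p)) 𝒰
      (𝓝 (UniformOnFun.ofFun _ ψ)) :=
    UniformOnFun.tendsto_iff_tendstoUniformlyOn.2 fun S hS =>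
      hequi.tendstoUniformlyOn_of_tendsto hψ (halmostproper S hS)
  exact ⟨ψ,
    mem_closure_of_tendsto hψX <| Eventually.of_forall fun p => ⟨_, ⟨p, rfl⟩, rfl⟩,
    fun a => tendsto_nhds_unique (hφ_pt a) (tendsto_pi_nhds.1 hψ a)⟩

/-- Let `(X,d)` be a metric space in which every bounded set is totally
bounded, `δ` an asymmetric metric on `X`, and `A ⊆ X` a closed subset such that both `δ`
and its restriction to `A` satisfy (bl) and (ic). Let `o ∈ A`. Then every normalized
horofunction of `A` (with respect to the restricted data) is the restriction to `A` of a
normalized horofunction of `X`. -/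
theorem horofunction_restriction
    {X : Type*} [MetricSpace X] (δ : X → X → ℝ)
    (halmostproper : ∀ s : Set X, IsBounded s → TotallyBounded s)
    (hpos : ∀ u v, 0 ≤ δ u v)
    (hzero : ∀ u v, δ u v = 0 ↔ u = v)
    (htri : ∀ u v w, δ u w ≤ δ u v + δ v w)
    (A : Set X) (hAclosed : IsClosed A) (o : X) (ho : o ∈ A)
    (hblX : ∃ α > (0 : ℝ), ∃ β > (0 : ℝ), ∀ p q : X,
      dist p q ≤ α * δ p q ∧ δ p q ≤ β * dist p q)
    (hicX : ∀ p q : X, ∀ s : ℝ, s ∈ Set.Icc 0 (δ p q) →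
      ∃ z : X, δ p q = δ p z + δ z q ∧ δ p z = s)
    (hblA : ∃ α > (0 : ℝ), ∃ β > (0 : ℝ), ∀ p q : A,
      dist p q ≤ α * δ ↑p ↑q ∧ δ ↑p ↑q ≤ β * dist p q)
    (hicA : ∀ p q : A, ∀ s : ℝ, s ∈ Set.Icc 0 (δ ↑p ↑q) →
      ∃ z : A, δ ↑p ↑q = δ ↑p ↑z + δ ↑z ↑q ∧ δ ↑p ↑z = s) :
    ∀ φ : A → ℝ,
      UniformOnFun.ofFun {s : Set A | IsBounded s} φ ∈
        closure (UniformOnFun.ofFun {s : Set A | IsBounded s} ''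
          {f : A → ℝ | ∃ p : A, f = fun x : A => δ ↑p ↑x - δ ↑p o}) →
      ∃ ψ : X → ℝ,
        UniformOnFun.ofFun {s : Set X | IsBounded s} ψ ∈
          closure (UniformOnFun.ofFun {s : Set X | IsBounded s} ''
            {f : X → ℝ | ∃ p : X, f = fun x => δ p x - δ p o}) ∧
        ∀ a : A, φ a = ψ ↑a :=
  horofunction_restriction_general δ halmostproper htri A o hblX
end

section
/- Let L, L' ⊆ K be two distinct dual faces and let p ∈ V. Then: (a) there exists u ∈ V with ν_L(p−u) − ν_L(p) ≠ ν(−u); and (b) there exists u ∈ V with ν_L(p−u) − ν_L(p) ≠ ν_{L'}(−u). -/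
open Bornology

/-- The polyhedral asymmetric norm `ν(u) = max {ξ_k(u) : k ∈ K}`. -/
noncomputable def nu {V : Type*} [AddCommGroup V] [Module ℝ V] {m : ℕ}
    (ξ : Fin (m + 1) → V →ₗ[ℝ] ℝ) (u : V) : ℝ :=
  Finset.univ.sup' Finset.univ_nonempty fun k => ξ k u

/-- `ν_L(u) = max {ξ_ℓ(u) : ℓ ∈ L}` (junk value `0` for `L = ∅`). -/
noncomputable def nuL {V : Type*} [AddCommGroup V] [Module ℝ V] {m : ℕ}
    (ξ : Fin (m + 1) → V →ₗ[ℝ] ℝ) (L : Finset (Fin (m + 1))) (u : V) : ℝ :=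
  if h : L.Nonempty then L.sup' h fun ℓ => ξ ℓ u else 0

/-- `L ⊆ K` is a dual face if there is `v` with `ν(v) = 1` and `L = {k : ξ_k(v) = 1}`. -/
def IsDualFace {V : Type*} [AddCommGroup V] [Module ℝ V] {m : ℕ}
    (ξ : Fin (m + 1) → V →ₗ[ℝ] ℝ) (L : Finset (Fin (m + 1))) : Prop :=
  ∃ v : V, nu ξ v = 1 ∧ ∀ k, k ∈ L ↔ ξ k v = 1

/-- `H_L = {u : ξ_k(u) = ξ_ℓ(u) for all k, ℓ ∈ L}`. -/
def HL {V : Type*} [AddCommGroup V] [Module ℝ V] {m : ℕ}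
    (ξ : Fin (m + 1) → V →ₗ[ℝ] ℝ) (L : Finset (Fin (m + 1))) : Set V :=
  {u : V | ∀ k ∈ L, ∀ l ∈ L, ξ k u = ξ l u}

/-
Both claims are read off at infinity. Along `u = p + t v`, with `v` exposing the face `L`, the
left side is `-t - ν_L(p) → -∞` while `ν ≥ 0`. For (b), equality for all `u` would make `ν_L` and
`ν_{L'}` differ by a bounded amount; both are positively homogeneous, hence equal, and the facets
`A_k` recover `L` from `ν_L`.
-/

theorem nonpos_of_forall_pos_mul_le {d C : ℝ} (h : ∀ t : ℝ, 0 < t → t * d ≤ C) : d ≤ 0 := by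
  by_contra! hd
  have hC := h ((|C| + 1) / d) (by positivity)
  rw [div_mul_cancel₀ _ hd.ne'] at hC
  linarith [le_abs_self C]

theorem le_of_le_add_const_of_posHomogeneous {V : Type*} [SMul ℝ V] {f g : V → ℝ} {C : ℝ}
    (hf : ∀ t : ℝ, 0 < t → ∀ u, f (t • u) = t * f u)
    (hg : ∀ t : ℝ, 0 < t → ∀ u, g (t • u) = t * g u)
    (hfg : ∀ u, f u ≤ g u + C) (u : V) : f u ≤ g u := by
  suffices f u - g u ≤ 0 by linarith
  refine nonpos_of_forall_pos_mul_le (C := C) fun t ht => ?_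
  have := hfg (t • u)
  rw [hf t ht, hg t ht] at this
  linarith

section Polyhedral

variable {V : Type*} [AddCommGroup V] [Module ℝ V] {m : ℕ} {ξ : Fin (m + 1) → V →ₗ[ℝ] ℝ}
  {L L' : Finset (Fin (m + 1))}

theorem nuL_of_nonempty (hL : L.Nonempty) (u : V) :
    nuL ξ L u = L.sup' hL fun ℓ => ξ ℓ u := dif_pos hL

theorem le_nuL {k : Fin (m + 1)} (hk : k ∈ L) (u : V) : ξ k u ≤ nuL ξ L u := by
  rw [nuL_of_nonempty ⟨k, hk⟩]
  exact Finset.le_sup' (fun ℓ => ξ ℓ u) hk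

theorem nuL_lt_of_forall_lt (hL : L.Nonempty) {c : ℝ} {u : V} (hu : ∀ ℓ ∈ L, ξ ℓ u < c) :
    nuL ξ L u < c := by
  rw [nuL_of_nonempty hL]
  exact (Finset.sup'_lt_iff hL).2 hu

theorem nuL_eq_of_forall_eq (hL : L.Nonempty) {c : ℝ} {u : V} (hu : ∀ ℓ ∈ L, ξ ℓ u = c) :
    nuL ξ L u = c := by
  rw [nuL_of_nonempty hL, Finset.sup'_congr hL rfl hu, Finset.sup'_const]

theorem nuL_add_le (hL : L.Nonempty) (u w : V) : nuL ξ L (u + w) ≤ nuL ξ L u + nuL ξ L w := by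
  rw [nuL_of_nonempty hL]
  refine Finset.sup'_le hL _ fun ℓ hℓ => ?_
  rw [map_add]
  exact add_le_add (le_nuL hℓ u) (le_nuL hℓ w)

theorem nuL_smul (hL : L.Nonempty) {t : ℝ} (ht : 0 ≤ t) (u : V) :
    nuL ξ L (t • u) = t * nuL ξ L u := by
  simp only [nuL_of_nonempty hL, map_smul, smul_eq_mul]
  exact (Finset.apply_sup'_eq_sup'_comp hL (t * ·) fun a b => mul_max_of_nonneg a b ht).symm

theorem IsDualFace.nonempty (hL : IsDualFace ξ L) : L.Nonempty := by
  obtain ⟨v, hv, hvL⟩ := hL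
  obtain ⟨k, -, hk⟩ := Finset.univ.exists_mem_eq_sup' Finset.univ_nonempty fun k => ξ k v
  exact ⟨k, (hvL k).2 (hk ▸ hv)⟩

theorem nu_nonneg (hpos : ∀ u : V, u ≠ 0 → 0 < nu ξ u) (u : V) : 0 ≤ nu ξ u := by
  rcases eq_or_ne u 0 with rfl | hu
  · simp [nu]
  · exact (hpos u hu).le

theorem nuL_eq_of_eq_translate_add_const (hL : L.Nonempty) (hL' : L'.Nonempty) {p : V} {c : ℝ}
    (h : ∀ u, nuL ξ L u = nuL ξ L' (u - p) + c) : nuL ξ L = nuL ξ L' := by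
  have upper : ∀ w, nuL ξ L w ≤ nuL ξ L' w + (nuL ξ L' (-p) + c) := fun w => by
    have := nuL_add_le (ξ := ξ) hL' w (-p)
    rw [← sub_eq_add_neg] at this
    linarith [h w]
  have lower : ∀ w, nuL ξ L' w ≤ nuL ξ L w + (nuL ξ L' p - c) := fun w => by
    have := nuL_add_le (ξ := ξ) hL' (w - p) p
    rw [sub_add_cancel] at this
    linarith [h w]
  have homL := fun t (ht : (0 : ℝ) < t) => nuL_smul (ξ := ξ) hL ht.le
  have homL' := fun t (ht : (0 : ℝ) < t) => nuL_smul (ξ := ξ) hL' ht.le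
  funext u
  exact le_antisymm (le_of_le_add_const_of_posHomogeneous homL homL' upper u)
    (le_of_le_add_const_of_posHomogeneous homL' homL lower u)

theorem mem_of_nuL_le {k : Fin (m + 1)} (hfacet : ∃ u : V, ξ k u = 1 ∧ ∀ l, l ≠ k → ξ l u < 1)
    (hL' : L'.Nonempty) (hk : k ∈ L) (hle : ∀ u, nuL ξ L u ≤ nuL ξ L' u) : k ∈ L' := by
  by_contra hk'
  obtain ⟨u, hu, hlt⟩ := hfacet
  have h1 : 1 ≤ nuL ξ L u := hu ▸ le_nuL hk u
  have h2 : nuL ξ L' u < 1 :=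
    nuL_lt_of_forall_lt hL' fun ℓ hℓ => hlt ℓ fun h => hk' (h ▸ hℓ)
  linarith [hle u]

theorem eq_of_nuL_eq (hfacet : ∀ k, ∃ u : V, ξ k u = 1 ∧ ∀ l, l ≠ k → ξ l u < 1)
    (hL : L.Nonempty) (hL' : L'.Nonempty) (h : nuL ξ L = nuL ξ L') : L = L' :=
  Finset.Subset.antisymm (fun k hk => mem_of_nuL_le (hfacet k) hL' hk fun u => (congrFun h u).le)
    fun k hk => mem_of_nuL_le (hfacet k) hL hk fun u => (congrFun h u).ge

end Polyhedral

theorem translated_nuL_horofunctions_distinct_general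
    {V : Type*} [NormedAddCommGroup V] [InnerProductSpace ℝ V]
    {m : ℕ} (ξ : Fin (m + 1) → V →ₗ[ℝ] ℝ)
    (hfacet : ∀ k, ∃ u : V, ξ k u = 1 ∧ ∀ l, l ≠ k → ξ l u < 1)
    (hpos : ∀ u : V, u ≠ 0 → 0 < nu ξ u)
    (L L' : Finset (Fin (m + 1))) (hL : IsDualFace ξ L) (hL' : IsDualFace ξ L')
    (hne : L ≠ L') (p : V) :
    (∃ u : V, nuL ξ L (p - u) - nuL ξ L p ≠ nu ξ (-u)) ∧
    (∃ u : V, nuL ξ L (p - u) - nuL ξ L p ≠ nuL ξ L' (-u)) := by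
  have hLne := hL.nonempty
  refine ⟨?_, ?_⟩
  · obtain ⟨v, -, hvL⟩ := hL
    set t := |nuL ξ L p| + 1
    have hface : nuL ξ L (p - (p + t • v)) = -t :=
      nuL_eq_of_forall_eq hLne fun ℓ hℓ => by simp [(hvL ℓ).1 hℓ]
    refine ⟨p + t • v, fun h => ?_⟩
    have := nu_nonneg hpos (-(p + t • v))
    rw [← h, hface] at this
    linarith [neg_abs_le (nuL ξ L p)]
  · by_contra! h
    refine hne (eq_of_nuL_eq hfacet hLne hL'.nonempty
      (nuL_eq_of_eq_translate_add_const hLne hL'.nonempty (p := p) (c := nuL ξ L p) fun u => ?_))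
    have := h (p - u)
    rw [sub_sub_cancel, neg_sub] at this
    linarith

/-- Let `L, L' ⊆ K` be two distinct dual faces and `p ∈ V`. Then the
translated horofunction `u ↦ ν_L(p−u) − ν_L(p)` differs from `u ↦ ν(−u)` and from
`u ↦ ν_{L'}(−u)`. -/
theorem translated_nuL_horofunctions_distinct
    {V : Type*} [NormedAddCommGroup V] [InnerProductSpace ℝ V] [FiniteDimensional ℝ V]
    {m : ℕ} (ξ : Fin (m + 1) → V →ₗ[ℝ] ℝ)
    (hfacet : ∀ k, ∃ u : V, ξ k u = 1 ∧ ∀ l, l ≠ k → ξ l u < 1)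
    (hpos : ∀ u : V, u ≠ 0 → 0 < nu ξ u)
    (L L' : Finset (Fin (m + 1))) (hL : IsDualFace ξ L) (hL' : IsDualFace ξ L')
    (hne : L ≠ L') (p : V) :
    (∃ u : V, nuL ξ L (p - u) - nuL ξ L p ≠ nu ξ (-u)) ∧
    (∃ u : V, nuL ξ L (p - u) - nuL ξ L p ≠ nuL ξ L' (-u)) :=
  translated_nuL_horofunctions_distinct_general ξ hfacet hpos L L' hL hL' hne p
end
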